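/- Let G be a positively weighted directed graph, u a vertex with d(s,t) < d(s,u)+d(u,t) < ∞, and G' the graph obtained by the vertex-elimination construction (deleting u and connecting in-neighbors to out-neighbors with weight min(w(x,y), w(x,u)+w(u,y))). For any x-to-y path P in G with x,y ≠ u, there is an x-to-y path P' in G' with w'(P') ≤ w(P); conversely, for any x-to-y path P' in G' there is an x-to-y path P in G with w(P) ≤ w'(P'). -/

import Mathlib

variable {V : Type*}

/-- Total weight of a walk given as a list of vertices. -/
def walkWt (w : V → V → ℝ) : List V → ℝ
  | [] => 0
  | [_] => 0
  | a :: b :: rest => w a b + walkWt w (b :: rest)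

/-- The list of (directed) edges traversed by a walk. -/
def listEdges : List V → List (V × V)
  | [] => []
  | [_] => []
  | a :: b :: rest => (a, b) :: listEdges (b :: rest)

/-- `l` is a walk from `u` to `v` in the digraph with edge relation `E`. -/
def IsWalkFrom (E : V → V → Prop) (u v : V) (l : List V) : Prop :=
  l.Chain' E ∧ l.head? = some u ∧ l.getLast? = some v

/-- `l` is a (simple) path from `u` to `v`. -/
def IsPathFrom (E : V → V → Prop) (u v : V) (l : List V) : Prop :=
  IsWalkFrom E u v l ∧ l.Nodup

/-- `d` is the shortest-path distance function of `(E, w)`: it lower-bounds the weight of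
every path, and is achieved by some path whenever some path exists. -/
def IsDistFn (E : V → V → Prop) (w : V → V → ℝ) (d : V → V → ℝ) : Prop :=
  (∀ u v l, IsPathFrom E u v l → d u v ≤ walkWt w l) ∧
  (∀ u v, (∃ l, IsPathFrom E u v l) → ∃ l, IsPathFrom E u v l ∧ walkWt w l = d u v)

/-- All edge weights are (strictly) positive. -/
def PosWeights (E : V → V → Prop) (w : V → V → ℝ) : Prop :=
  ∀ u v, E u v → 0 < w u v

/-- A back-edge relative to source `s`: `d(s,u) + w(u,v) > d(s,v)`. -/
def IsBackEdge (E : V → V → Prop) (w : V → V → ℝ) (d : V → V → ℝ) (s : V) (p : V × V) : Prop :=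
  E p.1 p.2 ∧ d s p.2 < d s p.1 + w p.1 p.2

/-- A forward-edge relative to source `s`: `d(s,u) + w(u,v) = d(s,v)`. -/
def IsForwardEdge (E : V → V → Prop) (w : V → V → ℝ) (d : V → V → ℝ) (s : V) (p : V × V) : Prop :=
  E p.1 p.2 ∧ d s p.1 + w p.1 p.2 = d s p.2

/-- A forward path: all its edges are forward-edges. -/
def IsForwardPath (E : V → V → Prop) (w : V → V → ℝ) (d : V → V → ℝ) (s : V) (l : List V) : Prop :=
  ∀ p ∈ listEdges l, IsForwardEdge E w d s p

/-- `(s,t)`-straight graph: every vertex lies on a shortest `s → t` path. -/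
def IsStraight (E : V → V → Prop) (w : V → V → ℝ) (d : V → V → ℝ) (s t : V) : Prop :=
  (∀ u, d s u + d u t = d s t) ∧
  (∀ u, ∃ l, IsPathFrom E s t l ∧ u ∈ l ∧ walkWt w l = d s t)

/-- `(s,t)`-layered graph. -/
def IsLayered (E : V → V → Prop) (w : V → V → ℝ) (d : V → V → ℝ) (s t : V) : Prop :=
  IsStraight E w d s t ∧
  (∀ u v, E u v → d s u ≠ d s v) ∧
  (∀ u v, E u v → d s u < d s v → ∀ x, d s x ≤ d s u ∨ d s u + w u v ≤ d s x)

/-- The layer of `u`: the rank of `d(s,u)` among the distinct values of `d(s,·)`. -/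
noncomputable def layer [Fintype V] (d : V → V → ℝ) (s : V) (u : V) : ℕ :=
  ((Finset.univ.image (fun x : V => d s x)).filter (fun p => p ≤ d s u)).card

/-- An `s → t` not-shortest path. -/
def IsNotShortest (E : V → V → Prop) (w : V → V → ℝ) (d : V → V → ℝ) (s t : V)
    (l : List V) : Prop :=
  IsPathFrom E s t l ∧ d s t < walkWt w l

/-- An `s → t` next-to-shortest path: a not-shortest path of minimum weight. -/
def IsNextToShortest (E : V → V → Prop) (w : V → V → ℝ) (d : V → V → ℝ) (s t : V)
    (l : List V) : Prop :=
  IsNotShortest E w d s t l ∧ ∀ l', IsNotShortest E w d s t l' → walkWt w l ≤ walkWt w l'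

/-- Back-edge decomposition of a path `l = l1 ∘ l0 ∘ l2`, where `l0` runs from `A` to `B`,
starting with the first back-edge of `l` and ending with the last one. -/
def IsBEDecomp (E : V → V → Prop) (w : V → V → ℝ) (d : V → V → ℝ) (s t : V)
    (l l1 l0 l2 : List V) (A B : V) : Prop :=
  IsPathFrom E s A l1 ∧ IsPathFrom E A B l0 ∧ IsPathFrom E B t l2 ∧
  l = l1 ++ l0.tail ++ l2.tail ∧
  (∀ p ∈ listEdges l1, ¬ IsBackEdge E w d s p) ∧
  (∀ p ∈ listEdges l2, ¬ IsBackEdge E w d s p) ∧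
  (∃ p, (listEdges l0).head? = some p ∧ IsBackEdge E w d s p) ∧
  (∃ p, (listEdges l0).getLast? = some p ∧ IsBackEdge E w d s p)

/-- Extended-real shortest-path distance: `⊤` when no path exists. -/
noncomputable def eDist (E : V → V → Prop) (w : V → V → ℝ) (x y : V) : EReal :=
  sInf {c : EReal | ∃ l, IsPathFrom E x y l ∧ c = ((walkWt w l : ℝ) : EReal)}

/-- Edge relation after eliminating the vertex `u`. -/
def elimE (E : V → V → Prop) (u : V) (x y : V) : Prop :=
  (E x y ∧ x ≠ u ∧ y ≠ u) ∨ (E x u ∧ E u y ∧ x ≠ y)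

open Classical in
/-- Weights after eliminating `u`. -/
noncomputable def elimW (E : V → V → Prop) (w : V → V → ℝ) (u : V) (x y : V) : ℝ :=
  if E x u ∧ E u y ∧ x ≠ y then
    (if E x y then min (w x y) (w x u + w u y) else w x u + w u y)
  else w x y

/-!
Forward direction: a path through `u` passes it as `a → u → b` with `a ≠ b`, and the edge
`(a, b)` of `G'` costs at most `w(a,u) + w(u,b)`; every other edge avoids `u`, and `w' ≤ w` on it.

Backward direction: every edge `(a, b)` of `G'` is realised in `G` by `[a, b]` or by the detour
`[a, u, b]` at cost at most `w'(a,b)`. Concatenating these gives a walk in `G` (possibly through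
`u` several times), and cutting out its cycles, which have nonnegative weight, leaves a path.
-/

theorem List.exists_eq_append_cons_append_cons_of_not_nodup {α : Type*} {l : List α}
    (h : ¬ l.Nodup) : ∃ s a t r, l = s ++ a :: (t ++ a :: r) := by
  induction l with
  | nil => exact absurd List.nodup_nil h
  | cons b l ih =>
    by_cases hb : b ∈ l
    · obtain ⟨t, r, rfl⟩ := List.append_of_mem hb
      exact ⟨[], b, t, r, rfl⟩
    · obtain ⟨s, a, t, r, rfl⟩ := ih fun hl => h (List.nodup_cons.2 ⟨hb, hl⟩)
      exact ⟨b :: s, a, t, r, rfl⟩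

theorem List.exists_eq_append_cons_cons_cons_of_mem {α : Type*} {l : List α} {u : α}
    (hu : u ∈ l) (hhead : l.head? ≠ some u) (hlast : l.getLast? ≠ some u) :
    ∃ s a b r, l = s ++ a :: u :: b :: r := by
  obtain ⟨s, r, rfl⟩ := List.append_of_mem hu
  obtain ⟨s, a, rfl⟩ := (List.eq_nil_or_concat' s).resolve_left (by rintro rfl; simp at hhead)
  obtain ⟨b, r, rfl⟩ := List.exists_cons_of_ne_nil (show r ≠ [] by rintro rfl; simp at hlast)
  exact ⟨s, a, b, r, by simp⟩

section Walks

variable {E : V → V → Prop} {w : V → V → ℝ} {x y a b : V} {l : List V}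

theorem walkWt_cons_cons : walkWt w (a :: b :: l) = w a b + walkWt w (b :: l) := rfl

theorem walkWt_append_cons :
    ∀ (l₁ : List V) (a : V) (l₂ : List V),
      walkWt w (l₁ ++ a :: l₂) = walkWt w (l₁ ++ [a]) + walkWt w (a :: l₂)
  | [], _, _ => by simp [walkWt]
  | [_], _, _ => by simp [walkWt]
  | c :: d :: l₁, a, l₂ => by
    have ih := walkWt_append_cons (d :: l₁) a l₂
    simp only [List.cons_append, walkWt_cons_cons] at ih ⊢
    rw [ih, add_assoc]

theorem walkWt_nonneg (hw : ∀ a b, E a b → 0 ≤ w a b) :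
    ∀ {l : List V}, l.IsChain E → 0 ≤ walkWt w l
  | [], _ | [_], _ => le_rfl
  | _ :: _ :: _, h => by
    rw [List.isChain_cons_cons] at h
    exact add_nonneg (hw _ _ h.1) (walkWt_nonneg hw h.2)

theorem walkWt_le_walkWt {f g : V → V → ℝ} (hfg : ∀ a b, E a b → f a b ≤ g a b) :
    ∀ {l : List V}, l.IsChain E → walkWt f l ≤ walkWt g l
  | [], _ | [_], _ => le_rfl
  | _ :: _ :: _, h => by
    rw [List.isChain_cons_cons] at h
    exact add_le_add (hfg _ _ h.1) (walkWt_le_walkWt hfg h.2)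

theorem isWalkFrom_iff :
    IsWalkFrom E x y l ↔ l.IsChain E ∧ l.head? = some x ∧ l.getLast? = some y :=
  Iff.rfl

theorem isWalkFrom_cons_cons :
    IsWalkFrom E a y (a :: b :: l) ↔ E a b ∧ IsWalkFrom E b y (b :: l) := by
  simp [isWalkFrom_iff, and_assoc]

theorem isWalkFrom_append_cons {l₁ l₂ : List V} :
    IsWalkFrom E x y (l₁ ++ a :: l₂) ↔
      IsWalkFrom E x a (l₁ ++ [a]) ∧ IsWalkFrom E a y (a :: l₂) := by
  have hhead : (l₁ ++ a :: l₂).head? = (l₁ ++ [a]).head? := by cases l₁ <;> rfl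
  rw [isWalkFrom_iff, isWalkFrom_iff, isWalkFrom_iff, List.isChain_split, hhead,
    List.getLast?_append_cons]
  simp only [List.getLast?_append, List.getLast?_singleton, Option.some_or, List.head?_cons]
  tauto

theorem IsWalkFrom.trans {l₁ l₂ : List V} (h₁ : IsWalkFrom E x a l₁)
    (h₂ : IsWalkFrom E a y l₂) :
    ∃ l, IsWalkFrom E x y l ∧ walkWt w l = walkWt w l₁ + walkWt w l₂ := by
  obtain ⟨s, rfl⟩ := List.getLast?_eq_some_iff.1 h₁.2.2
  obtain ⟨t, rfl⟩ := List.head?_eq_some_iff.1 h₂.2.1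
  exact ⟨s ++ a :: t, isWalkFrom_append_cons.2 ⟨h₁, h₂⟩, walkWt_append_cons s a t⟩

theorem IsWalkFrom.exists_isPathFrom (hw : ∀ a b, E a b → 0 ≤ w a b)
    (h : IsWalkFrom E x y l) : ∃ p, IsPathFrom E x y p ∧ walkWt w p ≤ walkWt w l := by
  induction hn : l.length using Nat.strong_induction_on generalizing l with
  | _ n ih =>
  by_cases hnd : l.Nodup
  · exact ⟨l, ⟨h, hnd⟩, le_rfl⟩
  obtain ⟨s, a, t, r, rfl⟩ := List.exists_eq_append_cons_append_cons_of_not_nodup hnd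
  obtain ⟨hs, hcycle_r⟩ := isWalkFrom_append_cons.1 h
  rw [← List.cons_append] at hcycle_r
  obtain ⟨hcycle, hr⟩ := isWalkFrom_append_cons.1 hcycle_r
  obtain ⟨p, hp, hpw⟩ := ih _ (by simp [← hn]) (isWalkFrom_append_cons.2 ⟨hs, hr⟩) rfl
  refine ⟨p, hp, hpw.trans ?_⟩
  rw [walkWt_append_cons s a r, walkWt_append_cons s a (t ++ a :: r), ← List.cons_append,
    walkWt_append_cons (a :: t)]
  linarith [walkWt_nonneg hw hcycle.1]

theorem IsWalkFrom.exists_lift {E' : V → V → Prop} {w' : V → V → ℝ}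
    (hE : ∀ a b, E' a b → ∃ m, IsWalkFrom E a b m ∧ walkWt w m ≤ w' a b) :
    ∀ {x : V} {l' : List V}, IsWalkFrom E' x y l' →
      ∃ l, IsWalkFrom E x y l ∧ walkWt w l ≤ walkWt w' l'
  | _, [], h => absurd h.2.1 (by simp)
  | _, [a], h => ⟨[a], ⟨List.isChain_singleton a, h.2⟩, le_rfl⟩
  | x, a :: b :: l', h => by
    obtain rfl : a = x := by simpa using h.2.1
    obtain ⟨hab, hb⟩ := isWalkFrom_cons_cons.1 h
    obtain ⟨m, hm, hmw⟩ := hE _ _ hab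
    obtain ⟨l, hl, hlw⟩ := exists_lift hE hb
    obtain ⟨k, hk, hkw⟩ := hm.trans (w := w) hl
    exact ⟨k, hk, by rw [hkw, walkWt_cons_cons]; linarith⟩

end Walks

section Elimination

variable {E : V → V → Prop} {w : V → V → ℝ} {u x y a b : V} {l : List V}

theorem elimW_le (h : E a b) : elimW E w u a b ≤ w a b := by
  unfold elimW
  split_ifs
  exacts [min_le_left _ _, le_rfl]

theorem elimW_le_detour (hau : E a u) (hub : E u b) (hab : a ≠ b) :
    elimW E w u a b ≤ w a u + w u b := by
  unfold elimW
  rw [if_pos ⟨hau, hub, hab⟩]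
  split_ifs
  exacts [min_le_right _ _, le_rfl]

theorem walkWt_elimW_le (h : l.IsChain E) : walkWt (elimW E w u) l ≤ walkWt w l :=
  walkWt_le_walkWt (fun _ _ => elimW_le) h

theorem exists_walk_le_elimW (h : elimE E u a b) :
    ∃ m, IsWalkFrom E a b m ∧ walkWt w m ≤ elimW E w u a b := by
  have direct (hab : E a b) : IsWalkFrom E a b [a, b] := ⟨List.isChain_pair.2 hab, rfl, rfl⟩
  have detour (hau : E a u) (hub : E u b) : IsWalkFrom E a b [a, u, b] :=
    ⟨List.isChain_cons_cons.2 ⟨hau, List.isChain_pair.2 hub⟩, rfl, rfl⟩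
  unfold elimW
  split_ifs with hC hab
  · rcases min_choice (w a b) (w a u + w u b) with hmin | hmin <;> rw [hmin]
    · exact ⟨[a, b], direct hab, by simp [walkWt]⟩
    · exact ⟨[a, u, b], detour hC.1 hC.2.1, by simp [walkWt]⟩
  · exact ⟨[a, u, b], detour hC.1 hC.2.1, by simp [walkWt]⟩
  · exact ⟨[a, b], direct (h.resolve_right hC).1, by simp [walkWt]⟩

theorem IsWalkFrom.elimE_of_not_mem (h : IsWalkFrom E x y l) (hu : u ∉ l) :
    IsWalkFrom (elimE E u) x y l :=
  ⟨h.1.imp_of_mem_imp fun _ _ ha hb hab =>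
    Or.inl ⟨hab, ne_of_mem_of_not_mem ha hu, ne_of_mem_of_not_mem hb hu⟩, h.2⟩

theorem IsPathFrom.exists_elimE_isPathFrom (hx : x ≠ u) (hy : y ≠ u) (h : IsPathFrom E x y l) :
    ∃ l', IsPathFrom (elimE E u) x y l' ∧ walkWt (elimW E w u) l' ≤ walkWt w l := by
  by_cases hu : u ∈ l
  swap
  · exact ⟨l, ⟨h.1.elimE_of_not_mem hu, h.2⟩, walkWt_elimW_le h.1.1⟩
  obtain ⟨s, a, b, r, rfl⟩ := List.exists_eq_append_cons_cons_cons_of_mem hu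
    (by simpa [h.1.2.1] using hx) (by simpa [h.1.2.2] using hy)
  obtain ⟨hu', hnd⟩ : u ∉ s ++ a :: b :: r ∧ (s ++ a :: b :: r).Nodup := by
    have hnd : (s ++ [a] ++ u :: b :: r).Nodup := by simpa using h.2
    simpa using List.nodup_middle.1 hnd
  have hab : a ≠ b := by
    rintro rfl
    exact (List.nodup_cons.1 (List.nodup_middle.1 hnd)).1 (by simp)
  obtain ⟨hsa, haur⟩ := isWalkFrom_append_cons.1 h.1
  obtain ⟨hau, hubr⟩ := isWalkFrom_cons_cons.1 haur
  obtain ⟨hub, hbr⟩ := isWalkFrom_cons_cons.1 hubr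
  refine ⟨s ++ a :: b :: r, ⟨isWalkFrom_append_cons.2 ⟨hsa.elimE_of_not_mem ?_,
    isWalkFrom_cons_cons.2 ⟨Or.inr ⟨hau, hub, hab⟩, hbr.elimE_of_not_mem ?_⟩⟩, hnd⟩,
    ?_⟩
  · simp only [List.mem_append, List.mem_cons, not_or] at hu' ⊢; tauto
  · simp only [List.mem_append, List.mem_cons, not_or] at hu' ⊢; tauto
  rw [walkWt_append_cons s a (b :: r), walkWt_append_cons s a (u :: b :: r), walkWt_cons_cons,
    walkWt_cons_cons, walkWt_cons_cons]
  linarith [walkWt_elimW_le (w := w) (u := u) hsa.1, walkWt_elimW_le (w := w) (u := u) hbr.1,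
    elimW_le_detour (w := w) hau hub hab]

theorem IsWalkFrom.exists_isPathFrom_of_elimE (hpos : PosWeights E w)
    (h : IsWalkFrom (elimE E u) x y l) :
    ∃ p, IsPathFrom E x y p ∧ walkWt w p ≤ walkWt (elimW E w u) l := by
  obtain ⟨m, hm, hmw⟩ := h.exists_lift fun _ _ => exists_walk_le_elimW
  obtain ⟨p, hp, hpw⟩ := hm.exists_isPathFrom fun a b hab => (hpos a b hab).le
  exact ⟨p, hp, hpw.trans hmw⟩

end Elimination

theorem stmt7_general (E : V → V → Prop) (w : V → V → ℝ) (u : V)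
    (hpos : PosWeights E w) :
    (∀ x y l, x ≠ u → y ≠ u → IsPathFrom E x y l →
      ∃ l', IsPathFrom (elimE E u) x y l' ∧
        walkWt (elimW E w u) l' ≤ walkWt w l) ∧
    (∀ x y l', x ≠ u → y ≠ u → IsPathFrom (elimE E u) x y l' →
      ∃ l, IsPathFrom E x y l ∧ walkWt w l ≤ walkWt (elimW E w u) l') :=
  ⟨fun _ _ _ hx hy hl => hl.exists_elimE_isPathFrom hx hy,
    fun _ _ _ _ _ hl' => hl'.1.exists_isPathFrom_of_elimE hpos⟩

/-- paths map both ways between `G` and the elimination graph `G'` without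
increasing weight. -/
theorem stmt7 [Fintype V] (E : V → V → Prop) (w : V → V → ℝ) (s t u : V)
    (hsimple : ∀ v, ¬ E v v) (hpos : PosWeights E w)
    (h1 : eDist E w s t < eDist E w s u + eDist E w u t)
    (h2 : eDist E w s u + eDist E w u t < ⊤) :
    (∀ x y l, x ≠ u → y ≠ u → IsPathFrom E x y l →
      ∃ l', IsPathFrom (elimE E u) x y l' ∧
        walkWt (elimW E w u) l' ≤ walkWt w l) ∧
    (∀ x y l', x ≠ u → y ≠ u → IsPathFrom (elimE E u) x y l' →
      ∃ l, IsPathFrom E x y l ∧ walkWt w l ≤ walkWt (elimW E w u) l') :=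
  stmt7_general E w u hpos
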